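/- Suppose T ∈ M_3(ℂ) has distinct eigenvalues λ_1, λ_2, λ_3 with corresponding unit eigenvectors x_1, x_2, x_3, and let y_1, y_2, y_3 be unit eigenvectors of T* corresponding to conj(λ_1), conj(λ_2), conj(λ_3). Let X = (x_1 | x_2 | x_3) be the 3×3 matrix with columns x_1, x_2, x_3. If |⟨x_i, x_j⟩| = |⟨y_i, y_j⟩| for all 1 ≤ i < j ≤ 3, then det(X*X) = (1 − |⟨x_1, x_2⟩|²)(1 − |⟨x_2, x_3⟩|²)(1 − |⟨x_3, x_1⟩|²). -/

import Mathlib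

open Matrix

/-- The standard Hermitian inner product on `ℂⁿ`, linear in the first slot. -/
noncomputable def hinner {n : ℕ} (x y : Fin n → ℂ) : ℂ := ∑ i, x i * (starRingEnd ℂ) (y i)

/-!
For `i ≠ j` the vectors `x_i` and `y_j` are eigenvectors of `T` and `T*` for eigenvalues that do not
correspond, so they are orthogonal and `D = X*Y` is diagonal. Hence `Y*Y = D* G⁻¹ D` with `G = X*X`:
up to the factor `det G`, the Gram matrix of the `y`'s is a diagonal congruence of `adj G`. Such a
congruence preserves `A₀₁A₁₀ / (A₀₀A₁₁)`, and `Y*Y` has unit diagonal, so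
`adj₀₁ adj₁₀ = adj₀₀ adj₁₁ |⟨y₀,y₁⟩|²`. Jacobi's identity `adj₀₀ adj₁₁ - adj₀₁ adj₁₀ = det G · G₂₂`
then gives `det G = adj₀₀ adj₁₁ (1 - |⟨x₀,x₁⟩|²)`, with `adj₀₀ = 1 - |⟨x₁,x₂⟩|²` and
`adj₁₁ = 1 - |⟨x₂,x₀⟩|²`.
-/

section hinner

variable {n : ℕ}

lemma hinner_smul_left (c : ℂ) (v w : Fin n → ℂ) : hinner (c • v) w = c * hinner v w := by
  simp [hinner, Finset.mul_sum, mul_assoc]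

lemma hinner_smul_right (c : ℂ) (v w : Fin n → ℂ) :
    hinner v (c • w) = (starRingEnd ℂ) c * hinner v w := by
  simp only [hinner, Pi.smul_apply, smul_eq_mul, map_mul, Finset.mul_sum]
  exact Finset.sum_congr rfl fun i _ => by ring

lemma hinner_conj_symm (v w : Fin n → ℂ) : hinner w v = (starRingEnd ℂ) (hinner v w) := by
  simp only [hinner, map_sum, map_mul, Complex.conj_conj]
  exact Finset.sum_congr rfl fun i _ => by ring

lemma hinner_mul_hinner_swap (v w : Fin n → ℂ) :
    hinner w v * hinner v w = ((‖hinner v w‖ ^ 2 : ℝ) : ℂ) := by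
  rw [hinner_conj_symm v w, mul_comm, Complex.mul_conj']
  push_cast; rfl

lemma hinner_mulVec_eq_hinner_conjTranspose_mulVec (M : Matrix (Fin n) (Fin n) ℂ)
    (v w : Fin n → ℂ) : hinner (M *ᵥ v) w = hinner v (Mᴴ *ᵥ w) := by
  simp only [hinner, mulVec, dotProduct, conjTranspose_apply, map_sum, map_mul,
    Complex.conj_conj, Finset.sum_mul, Finset.mul_sum, RCLike.star_def]
  rw [Finset.sum_comm]
  exact Finset.sum_congr rfl fun i _ => Finset.sum_congr rfl fun j _ => by ring

lemma hinner_eq_zero_of_mulVec_eq_smul {M : Matrix (Fin n) (Fin n) ℂ} {v w : Fin n → ℂ}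
    {μ ν : ℂ} (hv : M *ᵥ v = μ • v) (hw : Mᴴ *ᵥ w = (starRingEnd ℂ) ν • w) (hμν : μ ≠ ν) :
    hinner v w = 0 := by
  have h := hinner_mulVec_eq_hinner_conjTranspose_mulVec M v w
  rw [hv, hw, hinner_smul_left, hinner_smul_right, Complex.conj_conj] at h
  have h' : (μ - ν) * hinner v w = 0 := by linear_combination h
  exact (mul_eq_zero.1 h').resolve_left (sub_ne_zero.2 hμν)

end hinner

lemma conjTranspose_of_mul_of_apply {m n : ℕ} (u v : Fin m → Fin n → ℂ) (i j : Fin m) :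
    ((of fun i j => u j i)ᴴ * of fun i j => v j i) i j = hinner (v j) (u i) := by
  simp only [mul_apply, conjTranspose_apply, of_apply, hinner, RCLike.star_def]
  exact Finset.sum_congr rfl fun k _ => mul_comm _ _

lemma det_of_eigenvectors_ne_zero {K ι : Type*} [Field K] [Fintype ι] [DecidableEq ι]
    {M : Matrix ι ι K} {μ : ι → K} (hμ : Function.Injective μ) {v : ι → ι → K}
    (hv : ∀ i, M *ᵥ v i = μ i • v i) (hv0 : ∀ i, v i ≠ 0) : (of v).det ≠ 0 := by
  have hli : LinearIndependent K v :=
    Module.End.eigenvectors_linearIndependent' (mulVecLin M) μ hμ v fun i =>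
      ⟨Module.End.mem_eigenspace_iff.2 (hv i), hv0 i⟩
  exact ((isUnit_iff_isUnit_det _).1 (linearIndependent_rows_iff_isUnit.1 hli)).ne_zero

/-- With `D = Xᴴ Y`, this is `Yᴴ Y = Dᴴ (Xᴴ X)⁻¹ D` with the inverse cleared by the adjugate. -/
lemma det_smul_conjTranspose_mul_self {R ι : Type*} [CommRing R] [StarRing R] [Fintype ι]
    [DecidableEq ι] (X Y : Matrix ι ι R) :
    (Xᴴ * X).det • (Yᴴ * Y) = (Xᴴ * Y)ᴴ * (Xᴴ * X).adjugate * (Xᴴ * Y) := by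
  rw [conjTranspose_mul, conjTranspose_conjTranspose, adjugate_mul_distrib, det_mul]
  calc (Xᴴ.det * X.det) • (Yᴴ * Y) = Yᴴ * ((X * X.adjugate) * (Xᴴ.adjugate * Xᴴ)) * Y := by
        rw [mul_adjugate, adjugate_mul]
        simp [smul_smul, mul_comm]
    _ = Yᴴ * X * (X.adjugate * Xᴴ.adjugate) * (Xᴴ * Y) := by simp only [Matrix.mul_assoc]

/-- The `3 × 3` case of Jacobi's identity for the minors of the adjugate. -/
lemma adjugate_fin_three_minor {R : Type*} [CommRing R] (A : Matrix (Fin 3) (Fin 3) R) :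
    A.adjugate 0 0 * A.adjugate 1 1 - A.adjugate 0 1 * A.adjugate 1 0 = A.det * A 2 2 := by
  simp [adjugate_fin_three, det_fin_three]; ring

lemma det_eq_of_det_smul_eq_diagonal_mul_adjugate_mul_diagonal {K : Type*} [Field K]
    {A H : Matrix (Fin 3) (Fin 3) K} {p q : Fin 3 → K} (hA : A.det ≠ 0) (hA22 : A 2 2 = 1)
    (hH00 : H 0 0 = 1) (hH11 : H 1 1 = 1)
    (h : A.det • H = diagonal q * A.adjugate * diagonal p) :
    A.det = A.adjugate 0 0 * A.adjugate 1 1 * (1 - H 0 1 * H 1 0) := by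
  have entry (i j : Fin 3) : A.det * H i j = q i * A.adjugate i j * p j := by
    simpa using congrFun (congrFun h i) j
  have e00 := entry 0 0
  have e11 := entry 1 1
  have e01 := entry 0 1
  have e10 := entry 1 0
  rw [hH00, mul_one] at e00
  rw [hH11, mul_one] at e11
  -- multiply the off-diagonal entries and substitute the diagonal ones
  have hcross : A.adjugate 0 1 * A.adjugate 1 0 =
      A.adjugate 0 0 * A.adjugate 1 1 * (H 0 1 * H 1 0) := by
    refine mul_left_cancel₀ (pow_ne_zero 2 hA) ?_
    linear_combination
      A.adjugate 0 1 * A.adjugate 1 0 * (A.det * e00 + q 0 * A.adjugate 0 0 * p 0 * e11)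
        - A.adjugate 0 0 * A.adjugate 1 1 * (A.det * H 1 0 * e01 + q 0 * A.adjugate 0 1 * p 1 * e10)
  have hJ := adjugate_fin_three_minor A
  rw [hA22, mul_one] at hJ
  linear_combination -hJ - hcross

theorem det_gram_of_weak_angle_test (T : Matrix (Fin 3) (Fin 3) ℂ)
    (lam : Fin 3 → ℂ) (x y : Fin 3 → Fin 3 → ℂ)
    (hlam : Function.Injective lam)
    (hx : ∀ i, T.mulVec (x i) = lam i • x i)
    (hxu : ∀ i, hinner (x i) (x i) = 1)
    (hy : ∀ i, Tᴴ.mulVec (y i) = (starRingEnd ℂ) (lam i) • y i)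
    (hyu : ∀ i, hinner (y i) (y i) = 1)
    (X : Matrix (Fin 3) (Fin 3) ℂ)
    (hX : X = Matrix.of fun i j => x j i)
    (hwat : ∀ i j : Fin 3, i < j →
      ‖hinner (x i) (x j)‖ = ‖hinner (y i) (y j)‖) :
    (Xᴴ * X).det
      = (((1 - ‖hinner (x 0) (x 1)‖ ^ 2) *
          (1 - ‖hinner (x 1) (x 2)‖ ^ 2) *
          (1 - ‖hinner (x 2) (x 0)‖ ^ 2) : ℝ) : ℂ) := by
  set Y : Matrix (Fin 3) (Fin 3) ℂ := of fun i j => y j i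
  have hG (i j : Fin 3) : (Xᴴ * X) i j = hinner (x j) (x i) :=
    hX ▸ conjTranspose_of_mul_of_apply x x i j
  have hH (i j : Fin 3) : (Yᴴ * Y) i j = hinner (y j) (y i) :=
    conjTranspose_of_mul_of_apply y y i j
  have hD : Xᴴ * Y = diagonal fun i => hinner (y i) (x i) := by
    ext i j
    rw [hX, conjTranspose_of_mul_of_apply]
    rcases eq_or_ne i j with rfl | hij
    · rw [diagonal_apply_eq]
    · rw [diagonal_apply_ne _ hij, hinner_conj_symm,
        hinner_eq_zero_of_mulVec_eq_smul (hx i) (hy j) (hlam.ne hij), map_zero]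
  have hXdet : X.det ≠ 0 := by
    rw [hX, show (of fun i j => x j i) = (of x)ᵀ from rfl, det_transpose]
    exact det_of_eigenvectors_ne_zero hlam hx fun i h => by simpa [h, hinner] using hxu i
  have hdet : (Xᴴ * X).det ≠ 0 := by
    rw [det_mul, det_conjTranspose]
    exact mul_ne_zero (star_ne_zero.2 hXdet) hXdet
  rw [det_eq_of_det_smul_eq_diagonal_mul_adjugate_mul_diagonal (H := Yᴴ * Y) hdet
    (by rw [hG, hxu]) (by rw [hH, hyu]) (by rw [hH, hyu])
    (by rw [det_smul_conjTranspose_mul_self, hD, diagonal_conjTranspose]), adjugate_fin_three]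
  simp only [of_apply, cons_val', cons_val_zero, cons_val_one, empty_val', cons_val_fin_one,
    hG, hH, hxu]
  rw [hinner_mul_hinner_swap (x 1) (x 2), mul_comm (hinner (x 2) (x 0)),
    hinner_mul_hinner_swap (x 2) (x 0), hinner_mul_hinner_swap (y 0) (y 1),
    ← hwat 0 1 (by decide)]
  push_cast
  ring
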